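/- arXiv:2209.06349 — 7 statements merged into one kernel-verified Lean document; each statement's English description precedes it below -/
import Mathlib

section
/- Let G be a connected positively weighted graph on n vertices with eigenspaces Λ_1 < … < Λ_m of dimensions d_1, …, d_m, and let s_k = d_1 + … + d_k. For every k ∈ [m-1] there exists a positively weighted k-graphical design supported on at most s_k vertices. -/
open Matrix

/-- A positively weighted graph on `n` vertices, given by its symmetric
nonnegative weight matrix with zero diagonal.  An edge `ij` is present
exactly when `W i j > 0`, in which case its weight is `W i j`. -/
structure WeightedGraph (n : ℕ) where
  W : Matrix (Fin n) (Fin n) ℝ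
  symm : ∀ i j, W i j = W j i
  loopless : ∀ i, W i i = 0
  nonneg : ∀ i j, 0 ≤ W i j

/-- The weighted degree of a vertex. -/
def WeightedGraph.degree {n : ℕ} (G : WeightedGraph n) (i : Fin n) : ℝ :=
  ∑ j, G.W i j

/-- The combinatorial Laplacian `L = D - A`. -/
def WeightedGraph.lap {n : ℕ} (G : WeightedGraph n) : Matrix (Fin n) (Fin n) ℝ :=
  Matrix.diagonal G.degree - G.W

/-- The underlying simple graph: `i ~ j` iff the weight `W i j` is positive. -/
def WeightedGraph.toSimpleGraph {n : ℕ} (G : WeightedGraph n) : SimpleGraph (Fin n) where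
  Adj i j := i ≠ j ∧ 0 < G.W i j
  symm := by
    constructor
    intro i j h
    exact ⟨h.1.symm, by rw [← G.symm i j]; exact h.2⟩
  loopless := by
    constructor
    intro i h
    exact h.1 rfl

open Matrix

/-- Key sparsification lemma: given rows `U r`, `r ∈ K`, together with a row `i0 ∉ K`
that is the all-ones vector, any nonnegative vector with positive sum in the kernel of the
`K`-rows can be replaced with one of support at most `K.card + 1`. -/
theorem sparsify (n : ℕ) (U : Matrix (Fin n) (Fin n) ℝ) (i0 : Fin n)
    (hone : U i0 = fun _ => (1 : ℝ)) (K : Finset (Fin n)) (hK : i0 ∉ K) :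
    ∀ N (a : Fin n → ℝ), 0 ≤ a → 0 < ∑ i, a i → (∀ r ∈ K, U r ⬝ᵥ a = 0) →
      (Function.support a).ncard ≤ N →
      ∃ b : Fin n → ℝ, 0 ≤ b ∧ 0 < ∑ i, b i ∧ (∀ r ∈ K, U r ⬝ᵥ b = 0) ∧
        (Function.support b).ncard ≤ K.card + 1 := by
  intro N
  induction N with
  | zero =>
    intro a ha hsum hker hcard
    exact ⟨a, ha, hsum, hker, le_trans hcard (Nat.zero_le _)⟩
  | succ N ih =>
    intro a ha hsum hker hcard
    by_cases hbig : (Function.support a).ncard ≤ K.card + 1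
    · exact ⟨a, ha, hsum, hker, hbig⟩
    push_neg at hbig
    -- S: the support of a as a Finset
    set S : Finset (Fin n) := Finset.univ.filter (fun i => a i ≠ 0) with hS
    have hScoe : (S : Set (Fin n)) = Function.support a := by
      ext i; simp [hS, Function.mem_support]
    have hScard : (Function.support a).ncard = S.card := by
      rw [← hScoe, Set.ncard_coe_finset]
    -- find a nonzero kernel vector supported on S, also orthogonal to 𝟙
    set K' : Finset (Fin n) := insert i0 K with hK'
    have hK'card : K'.card = K.card + 1 := Finset.card_insert_of_notMem hK
    set M : Matrix K' S ℝ := fun r i => U r.1 i.1 with hM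
    have hker_ne : ∃ z' : S → ℝ, z' ≠ 0 ∧ M *ᵥ z' = 0 := by
      by_contra hc
      push_neg at hc
      have hinj : Function.Injective M.mulVecLin := by
        rw [← LinearMap.ker_eq_bot]
        rw [LinearMap.ker_eq_bot']
        intro z' hz'
        by_contra hz'0
        exact (hc z' hz'0) hz'
      have := LinearMap.finrank_le_finrank_of_injective hinj
      rw [Module.finrank_fintype_fun_eq_card, Module.finrank_fintype_fun_eq_card] at this
      rw [Fintype.card_coe, Fintype.card_coe, hK'card] at this
      rw [hScard] at hbig
      omega
    obtain ⟨z', hz'ne, hz'ker⟩ := hker_ne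
    -- extend z' by zero
    set z : Fin n → ℝ := fun i => if h : i ∈ S then z' ⟨i, h⟩ else 0 with hz
    have hzsupp : ∀ i, a i = 0 → z i = 0 := by
      intro i hai
      have : i ∉ S := by simp [hS, hai]
      simp [hz, this]
    have hzker : ∀ r ∈ K', U r ⬝ᵥ z = 0 := by
      intro r hr
      have heq : U r ⬝ᵥ z = ∑ i ∈ S, U r i * z i := by
        rw [dotProduct]
        symm
        apply Finset.sum_subset (Finset.subset_univ S)
        intro i _ hiS
        have hzi : z i = 0 := by simp [hz, hiS]
        simp [hzi]
      have h0 : (∑ i : S, M ⟨r, hr⟩ i * z' i) = 0 := by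
        have := congrFun hz'ker ⟨r, hr⟩
        simpa [mulVec, dotProduct] using this
      rw [heq, ← h0, ← Finset.sum_attach S (fun i => U r i * z i)]
      apply Finset.sum_congr rfl
      intro i _
      simp [hM, hz, i.2]
    have hzne : ∃ i, z i ≠ 0 := by
      obtain ⟨j, hj⟩ := Function.ne_iff.mp hz'ne
      exact ⟨j.1, by simpa [hz, j.2] using hj⟩
    -- WLOG some entry of z is positive
    have hwlog : ∃ w : Fin n → ℝ, (∀ r ∈ K', U r ⬝ᵥ w = 0) ∧
        (∀ i, a i = 0 → w i = 0) ∧ ∃ i, 0 < w i := by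
      obtain ⟨j, hj⟩ := hzne
      rcases hj.lt_or_gt with hneg | hpos
      · refine ⟨-z, ?_, ?_, ⟨j, by simpa using hneg⟩⟩
        · intro r hr; rw [dotProduct_neg, hzker r hr, neg_zero]
        · intro i hai; simp [hzsupp i hai]
      · exact ⟨z, hzker, hzsupp, j, hpos⟩
    obtain ⟨w, hwker, hwsupp, jw, hjw⟩ := hwlog
    set P : Finset (Fin n) := Finset.univ.filter (fun i => 0 < w i) with hP
    have hPne : P.Nonempty := ⟨jw, by simp [hP, hjw]⟩
    set t : ℝ := P.inf' hPne (fun i => a i / w i) with ht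
    have hapos : ∀ i ∈ P, 0 < a i := by
      intro i hi
      have hwi : 0 < w i := by simpa [hP] using hi
      rcases (ha i).lt_or_eq with h | h
      · exact h
      · exact absurd (hwsupp i h.symm) (ne_of_gt hwi)
    have htpos : 0 < t := by
      rw [ht, Finset.lt_inf'_iff]
      intro i hi
      exact div_pos (hapos i hi) (by simpa [hP] using hi)
    set b : Fin n → ℝ := fun i => a i - t * w i with hb
    have hbnn : 0 ≤ b := by
      intro i
      by_cases hwi : 0 < w i
      · have hle : t ≤ a i / w i := Finset.inf'_le _ (by simp [hP, hwi])
        have := (le_div_iff₀ hwi).mp hle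
        simp only [hb, Pi.zero_apply]; linarith
      · push_neg at hwi
        have : t * w i ≤ 0 := mul_nonpos_of_nonneg_of_nonpos htpos.le hwi
        have hai : (0:ℝ) ≤ a i := ha i
        simp only [hb, Pi.zero_apply]; linarith
    have hwsum : ∑ i, w i = 0 := by
      have := hwker i0 (Finset.mem_insert_self i0 K)
      rw [hone, dotProduct] at this
      simpa using this
    have hbsum : 0 < ∑ i, b i := by
      simp only [hb]
      rw [Finset.sum_sub_distrib, ← Finset.mul_sum, hwsum, mul_zero, sub_zero]
      exact hsum
    have hbker : ∀ r ∈ K, U r ⬝ᵥ b = 0 := by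
      intro r hr
      have h1 : U r ⬝ᵥ b = U r ⬝ᵥ a - t * (U r ⬝ᵥ w) := by
        simp only [hb, dotProduct, Finset.mul_sum, mul_sub, Finset.sum_sub_distrib]
        ring_nf
        congr 1
        apply Finset.sum_congr rfl; intro i _; ring
      rw [h1, hker r hr, hwker r (Finset.mem_insert_of_mem hr), mul_zero, sub_zero]
    -- the minimizer vanishes
    obtain ⟨istar, histar, htstar⟩ := Finset.exists_mem_eq_inf' hPne (fun i => a i / w i)
    have hwistar : 0 < w istar := by simpa [hP] using histar
    have hbistar : b istar = 0 := by
      have hw0 : w istar ≠ 0 := ne_of_gt hwistar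
      simp only [hb]
      rw [ht, htstar, div_mul_cancel₀ _ hw0, sub_self]
    have hsuppss : Function.support b ⊂ Function.support a := by
      constructor
      · intro i hi
        simp only [Function.mem_support] at hi ⊢
        intro hai
        exact hi (by simp [hb, hai, hwsupp i hai])
      · intro hss
        have : a istar ≠ 0 := ne_of_gt (hapos istar histar)
        have h1 : istar ∈ Function.support a := this
        have h2 : istar ∉ Function.support b := by simp [Function.mem_support, hbistar]
        exact h2 (hss h1)
    have hcard' : (Function.support b).ncard ≤ N := by
      have := Set.ncard_lt_ncard hsuppss (Set.toFinite _)
      omega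
    exact ih b hbnn hbsum hbker hcard'

/-- Theorem (facet bound).  Let the rows of `U` be an orthogonal Laplacian
eigenbasis of a connected positively weighted graph `G` with row `0` equal to
`𝟙`, and let `K` (with `0 ∉ K`) index the rows spanning `Λ₂, …, Λ_k`, so that
`s_k = d₁ + ⋯ + d_k = |K| + 1`.  Then there is a positively weighted
`k`-graphical design supported on at most `s_k` vertices: a nonnegative
nonzero vector `a` with `U_K a = 0` whose support has at most `|K| + 1`
elements. -/
theorem design_facet_bound (n : ℕ) (hn : 0 < n) (G : WeightedGraph n)
    (hconn : G.toSimpleGraph.Connected)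
    (U : Matrix (Fin n) (Fin n) ℝ) (μ : Fin n → ℝ)
    (heig : ∀ r, G.lap *ᵥ U r = μ r • U r)
    (horth : ∀ r s, r ≠ s → U r ⬝ᵥ U s = 0)
    (hnz : ∀ r, U r ≠ 0)
    (hone : U ⟨0, hn⟩ = fun _ => (1 : ℝ))
    (K : Finset (Fin n)) (hK : (⟨0, hn⟩ : Fin n) ∉ K) (hKn : K.card < n - 1) :
    ∃ a : Fin n → ℝ, 0 ≤ a ∧ a ≠ 0 ∧ (∀ r ∈ K, U r ⬝ᵥ a = 0) ∧
      (Function.support a).ncard ≤ K.card + 1 := by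
  obtain ⟨b, hb0, hbsum, hbker, hbcard⟩ := sparsify n U ⟨0, hn⟩ hone K hK n
    (fun _ => 1) (fun i => zero_le_one) (by simpa using hn)
    (by
      intro r hr
      have hne : r ≠ (⟨0, hn⟩ : Fin n) := fun h => hK (h ▸ hr)
      have := horth r ⟨0, hn⟩ hne
      rwa [hone] at this)
    (by
      calc (Function.support (fun _ : Fin n => (1:ℝ))).ncard
          ≤ (Set.univ : Set (Fin n)).ncard :=
            Set.ncard_le_ncard (Set.subset_univ _) (Set.toFinite _)
        _ = n := by rw [Set.ncard_univ]; simp)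
  refine ⟨b, hb0, ?_, hbker, hbcard⟩
  intro h
  rw [h] at hbsum
  simp at hbsum
end

section
/- Fix an eigenspace ordering of a connected positively weighted graph G. The i-th column of U_{k̄} lies in the interior of the eigenpolytope P_{k̄} (i.e., lies on no proper face) if and only if the vertex i belongs to the support of every positively weighted k-graphical design of G. -/
open Matrix

/-- `F` is a face of `P`: either the empty face, or the set of maximizers
over `P` of some linear functional (this includes `P` itself, via `f = 0`). -/
def IsFace {E : Type*} [AddCommGroup E] [Module ℝ E] (P F : Set E) : Prop :=
  F = ∅ ∨ ∃ f : E →ₗ[ℝ] ℝ, F = {x ∈ P | ∀ y ∈ P, f y ≤ f x}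

lemma expand_aux {n : ℕ} (U : Matrix (Fin n) (Fin n) ℝ)
    (horth : ∀ r s, r ≠ s → U r ⬝ᵥ U s = 0) (hnz : ∀ r, U r ≠ 0)
    (a : Fin n → ℝ) : ∃ d : Fin n → ℝ, (∀ j, a j = ∑ s, d s * U s j) ∧
      ∀ r, U r ⬝ᵥ a = 0 → d r = 0 := by
  have hself : ∀ r, U r ⬝ᵥ U r ≠ 0 := fun r h => hnz r (dotProduct_self_eq_zero.mp h)
  have hdot : ∀ (c : Fin n → ℝ) (t : Fin n),
      (∑ s, c s • U s) ⬝ᵥ U t = c t * (U t ⬝ᵥ U t) := by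
    intro c t
    simp only [dotProduct, Finset.sum_apply, Pi.smul_apply, smul_eq_mul,
      Finset.sum_mul]
    rw [Finset.sum_comm, Finset.sum_eq_single t]
    · rw [Finset.mul_sum]
      exact Finset.sum_congr rfl fun j _ => by ring
    · intro s _ hst
      have h0 : ∑ j, U s j * U t j = 0 := horth s t hst
      simp only [mul_assoc, ← Finset.mul_sum, h0, mul_zero]
    · simp
  have hli : LinearIndependent ℝ (fun r => U r) := by
    rw [Fintype.linearIndependent_iff]
    intro c hc t
    have := hdot c t
    rw [hc, zero_dotProduct] at this
    exact (mul_eq_zero.mp this.symm).resolve_right (hself t)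
  have hsp : Submodule.span ℝ (Set.range fun r => U r) = ⊤ := by
    rcases Nat.eq_zero_or_pos n with h0 | h0
    · subst h0
      apply Subsingleton.elim
    · have : Nonempty (Fin n) := ⟨⟨0, h0⟩⟩
      exact hli.span_eq_top_of_card_eq_finrank (by simp)
  have ha : a ∈ Submodule.span ℝ (Set.range fun r => U r) := hsp ▸ Submodule.mem_top
  rw [Submodule.mem_span_range_iff_exists_fun] at ha
  obtain ⟨d, hd⟩ := ha
  refine ⟨d, fun j => ?_, fun r hr => ?_⟩
  · have := congrFun hd j
    simp only [Finset.sum_apply, Pi.smul_apply, smul_eq_mul] at this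
    exact this.symm
  · have h1 : a ⬝ᵥ U r = 0 := by
      rw [dotProduct_comm]; exact hr
    rw [← hd, hdot] at h1
    exact (mul_eq_zero.mp h1).resolve_right (hself r)

open Classical in
lemma sum_subtype_eq_aux {n : ℕ} (K : Set (Fin n)) (g : Fin n → ℝ)
    (hg : ∀ s ∈ K, g s = 0) :
    ∑ r : {r : Fin n // r ∉ K}, g r.1 = ∑ s, g s := by
  rw [← Finset.sum_filter_add_sum_filter_not Finset.univ (fun s => s ∉ K) g]
  have h2 : ∑ s ∈ Finset.univ.filter (fun s => ¬ s ∉ K), g s = 0 :=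
    Finset.sum_eq_zero fun s hs => hg s (not_not.mp (Finset.mem_filter.mp hs).2)
  rw [h2, add_zero]
  exact (Finset.sum_subtype _ (by simp) g).symm

/-- A column of `U_{k̄}` lies in the interior of the eigenpolytope `P_{k̄}`
(i.e. it lies on no proper face) if and only if the corresponding vertex `i`
belongs to the support of every positively weighted `k`-graphical design.
Setup as in the design–eigenpolytope correspondence: the rows of `U` are an
orthogonal Laplacian eigenbasis of the connected positively weighted graph
`G`, row `0` is `𝟙`, and `K` (with `0 ∉ K`) indexes the rows for
`Λ₂, …, Λ_k`. -/
theorem interior_iff_in_every_design (n : ℕ) (hn : 0 < n) (G : WeightedGraph n)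
    (hconn : G.toSimpleGraph.Connected)
    (U : Matrix (Fin n) (Fin n) ℝ) (μ : Fin n → ℝ)
    (heig : ∀ r, G.lap *ᵥ U r = μ r • U r)
    (horth : ∀ r s, r ≠ s → U r ⬝ᵥ U s = 0)
    (hnz : ∀ r, U r ≠ 0)
    (hone : U ⟨0, hn⟩ = fun _ => (1 : ℝ))
    (K : Set (Fin n)) (hK : (⟨0, hn⟩ : Fin n) ∉ K)
    (i : Fin n) :
    (∀ F : Set ({r : Fin n // r ∉ K} → ℝ),
        IsFace (convexHull ℝ
          (Set.range fun j : Fin n => fun r : {r : Fin n // r ∉ K} => U r.1 j)) F →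
        F ≠ convexHull ℝ
          (Set.range fun j : Fin n => fun r : {r : Fin n // r ∉ K} => U r.1 j) →
        (fun r : {r : Fin n // r ∉ K} => U r.1 i) ∉ F) ↔
    (∀ a : Fin n → ℝ, 0 ≤ a → a ≠ 0 → (∀ r ∈ K, U r ⬝ᵥ a = 0) →
      i ∈ Function.support a) := by
  classical
  set v : Fin n → ({r : Fin n // r ∉ K} → ℝ) :=
    fun j => fun r => U r.1 j with hv
  set P : Set ({r : Fin n // r ∉ K} → ℝ) := convexHull ℝ (Set.range v) with hP
  have hvP : ∀ j, v j ∈ P := fun j => subset_convexHull ℝ _ (Set.mem_range_self j)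
  constructor
  · -- interior → in every design support
    intro hface a hanneg hane haK
    by_contra hi
    have hai : a i = 0 := by simpa [Function.mem_support, not_not] using hi
    obtain ⟨d, hd, hdK⟩ := expand_aux U horth hnz a
    set f : (({r : Fin n // r ∉ K} → ℝ)) →ₗ[ℝ] ℝ :=
      ∑ r : {r : Fin n // r ∉ K}, (-(d r.1)) • LinearMap.proj r with hf
    have hfv : ∀ j, f (v j) = - a j := by
      intro j
      have h1 : f (v j) = ∑ r : {r : Fin n // r ∉ K}, -(d r.1) * U r.1 j := by
        rw [hf, LinearMap.sum_apply]
        exact Finset.sum_congr rfl fun r _ => by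
          rw [LinearMap.smul_apply, LinearMap.proj_apply]
          simp [hv, smul_eq_mul]
      have h2 : ∑ r : {r : Fin n // r ∉ K}, (fun s => d s * U s j) r.1
          = ∑ s, d s * U s j :=
        sum_subtype_eq_aux K (fun s => d s * U s j)
          (fun s hs => by show d s * U s j = 0; rw [hdK s (haK s hs), zero_mul])
      rw [h1]
      simp only [neg_mul]
      rw [Finset.sum_neg_distrib]
      simp only at h2
      rw [h2, ← hd j]
    have hPle : ∀ y ∈ P, f y ≤ 0 := by
      intro y hy
      have : P ⊆ {w | f w ≤ 0} := by
        rw [hP]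
        apply convexHull_min
        · rintro x ⟨j, rfl⟩
          have h := Pi.le_def.mp hanneg j
          simp only [Pi.zero_apply] at h
          simp only [Set.mem_setOf_eq, hfv j]
          linarith
        · exact convex_halfSpace_le f.isLinear 0
      exact this hy
    set F : Set ({r : Fin n // r ∉ K} → ℝ) := {x ∈ P | ∀ y ∈ P, f y ≤ f x} with hF
    have hviF : v i ∈ F := by
      refine ⟨hvP i, fun y hy => ?_⟩
      rw [hfv i, hai, neg_zero]
      exact hPle y hy
    have hFface : IsFace P F := Or.inr ⟨f, rfl⟩
    have hFne : F ≠ P := by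
      obtain ⟨j, hj⟩ := Function.ne_iff.mp hane
      have hj' : 0 < a j := by
        have h := Pi.le_def.mp hanneg j
        simp only [Pi.zero_apply] at h
        exact lt_of_le_of_ne h (Ne.symm (by simpa using hj))
      intro hFP
      have : v j ∈ F := hFP ▸ hvP j
      have := this.2 (v i) (hvP i)
      rw [hfv i, hfv j, hai, neg_zero] at this
      linarith
    exact hface F hFface hFne hviF
  · -- in every design support → interior
    intro hdes F hFace hFne hviF
    rcases hFace with rfl | ⟨f, rfl⟩
    · simp at hviF
    · obtain ⟨hviP, hmax⟩ := hviF
      set M : ℝ := f (fun r => U r.1 i) with hM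
      have hMi : f (v i) = M := rfl
      set a : Fin n → ℝ := fun j => M - f (v j) with ha
      have hanneg : 0 ≤ a := Pi.le_def.mpr fun j => by
        have := hmax (v j) (hvP j)
        simp only [ha, Pi.zero_apply]
        linarith
      have hai : a i = 0 := by simp [ha, ← hMi]
      have hfexp : ∀ x : {r : Fin n // r ∉ K} → ℝ,
          f x = ∑ s : {r : Fin n // r ∉ K}, x s * f (fun t => if s = t then 1 else 0) := by
        intro x
        rw [LinearMap.pi_apply_eq_sum_univ]
        simp [smul_eq_mul]
      have haK : ∀ r ∈ K, U r ⬝ᵥ a = 0 := by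
        intro r hr
        have hr0 : r ≠ (⟨0, hn⟩ : Fin n) := fun h => hK (h ▸ hr)
        have h1 : ∑ j, U r j = 0 := by
          have := horth r ⟨0, hn⟩ hr0
          simpa [dotProduct, hone] using this
        have h2 : ∀ s : {r : Fin n // r ∉ K}, ∑ j, U r j * U s.1 j = 0 :=
          fun s => horth r s.1 fun h => s.2 (h ▸ hr)
        have h3 : ∑ j, U r j * f (v j) = 0 := by
          calc ∑ j, U r j * f (v j)
              = ∑ j, ∑ s : {r : Fin n // r ∉ K},
                  U r j * (U s.1 j * f (fun t => if s = t then 1 else 0)) := by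
                refine Finset.sum_congr rfl fun j _ => ?_
                rw [hfexp (v j), Finset.mul_sum]
            _ = ∑ s : {r : Fin n // r ∉ K}, ∑ j,
                  U r j * (U s.1 j * f (fun t => if s = t then 1 else 0)) :=
                Finset.sum_comm
            _ = ∑ s : {r : Fin n // r ∉ K},
                  (∑ j, U r j * U s.1 j) * f (fun t => if s = t then 1 else 0) := by
                refine Finset.sum_congr rfl fun s _ => ?_
                rw [Finset.sum_mul]
                exact Finset.sum_congr rfl fun j _ => by ring
            _ = 0 := Finset.sum_eq_zero fun s _ => by rw [h2 s, zero_mul]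
        show ∑ j, U r j * a j = 0
        calc ∑ j, U r j * a j
            = (∑ j, U r j) * M - ∑ j, U r j * f (v j) := by
              rw [Finset.sum_mul, ← Finset.sum_sub_distrib]
              exact Finset.sum_congr rfl fun j _ => by rw [ha]; ring
          _ = 0 := by rw [h1, h3, zero_mul, sub_zero]
      have hane : a ≠ 0 := by
        intro h0
        have hfc : ∀ j, f (v j) = M := by
          intro j
          have := congrFun h0 j
          simp only [ha, Pi.zero_apply] at this
          linarith
        apply hFne
        ext x
        constructor
        · exact fun hx => hx.1
        · intro hxP
          refine ⟨hxP, fun y hy => ?_⟩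
          have hge : M ≤ f x := by
            have : P ⊆ {w | M ≤ f w} := by
              rw [hP]
              apply convexHull_min
              · rintro z ⟨j, rfl⟩
                exact le_of_eq (hfc j).symm
              · exact convex_halfSpace_ge f.isLinear M
            exact this hxP
          exact le_trans (hmax y hy) (le_trans (le_of_eq hMi) hge)
      have := hdes a hanneg hane haK
      rw [Function.mem_support] at this
      exact this hai
end

section
/- If a connected positively weighted graph has a combinatorial k-graphical design S (a proper nonempty subset with U_k 𝟙_S = 0), then no column of U_{k̄} lies in the interior of the eigenpolytope P_{k̄}: every graph vertex lies on some proper face of P_{k̄}. -/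
open Matrix

open Classical
noncomputable section

private lemma sum_dotProduct_aux {n : ℕ} {ι : Type*} [Fintype ι]
    (f : ι → Fin n → ℝ) (w : Fin n → ℝ) :
    (∑ r, f r) ⬝ᵥ w = ∑ r, f r ⬝ᵥ w := by
  simp only [dotProduct, Finset.sum_apply, Finset.sum_mul]
  exact Finset.sum_comm


/-- If a connected positively weighted graph has a combinatorial `k`-graphical
design `S` (a proper nonempty subset with `U_K 𝟙_S = 0`), then no column of
`U_{k̄}` lies in the interior of the eigenpolytope `P_{k̄}`: every graph vertex
lies on some proper face of `P_{k̄}`.  Setup as in the design–eigenpolytope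
correspondence. -/
theorem combinatorial_design_no_interior_vertex (n : ℕ) (hn : 0 < n)
    (G : WeightedGraph n) (hconn : G.toSimpleGraph.Connected)
    (U : Matrix (Fin n) (Fin n) ℝ) (μ : Fin n → ℝ)
    (heig : ∀ r, G.lap *ᵥ U r = μ r • U r)
    (horth : ∀ r s, r ≠ s → U r ⬝ᵥ U s = 0)
    (hnz : ∀ r, U r ≠ 0)
    (hone : U ⟨0, hn⟩ = fun _ => (1 : ℝ))
    (K : Set (Fin n)) (hK : (⟨0, hn⟩ : Fin n) ∉ K)
    (S : Set (Fin n)) (hSne : S.Nonempty) (hSproper : S ≠ Set.univ)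
    (hdesign : ∀ r ∈ K, U r ⬝ᵥ (fun i => if i ∈ S then (1 : ℝ) else 0) = 0) :
    ∀ i : Fin n, ∃ F : Set ({r : Fin n // r ∉ K} → ℝ),
      IsFace (convexHull ℝ
        (Set.range fun j : Fin n => fun r : {r : Fin n // r ∉ K} => U r.1 j)) F ∧
      F ≠ convexHull ℝ
        (Set.range fun j : Fin n => fun r : {r : Fin n // r ∉ K} => U r.1 j) ∧
      (fun r : {r : Fin n // r ∉ K} => U r.1 i) ∈ F := by
  -- the indicator vector of S
  set one_S : Fin n → ℝ := fun i => if i ∈ S then (1 : ℝ) else 0 with hone_S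
  -- positivity of self dot products
  have hpos : ∀ r, 0 < U r ⬝ᵥ U r := by
    intro r
    have hne : U r ⬝ᵥ U r ≠ 0 := fun h => hnz r (dotProduct_self_eq_zero.mp h)
    have hnn : 0 ≤ U r ⬝ᵥ U r := Finset.sum_nonneg fun i _ => mul_self_nonneg _
    exact lt_of_le_of_ne hnn (Ne.symm hne)
  -- linear independence of the rows of U
  have li : LinearIndependent ℝ U := by
    refine Fintype.linearIndependent_iff.mpr ?_
    intro g hg s
    have h0 : (∑ r, g r • U r) ⬝ᵥ U s = 0 := by rw [hg, zero_dotProduct]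
    rw [sum_dotProduct_aux] at h0
    have : ∀ r, g r • U r ⬝ᵥ U s = if r = s then g s * (U s ⬝ᵥ U s) else 0 := by
      intro r
      by_cases h : r = s
      · subst h; simp [smul_dotProduct, smul_eq_mul]
      · simp [smul_dotProduct, horth r s h, h]
    rw [Finset.sum_congr rfl (fun r _ => this r), Finset.sum_ite_eq' Finset.univ s] at h0
    simp only [Finset.mem_univ, if_true] at h0
    exact (mul_eq_zero.mp h0).resolve_right (ne_of_gt (hpos s))
  -- the rows of U span everything
  have hspan : Submodule.span ℝ (Set.range U) = ⊤ := by
    have : Nonempty (Fin n) := ⟨⟨0, hn⟩⟩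
    exact li.span_eq_top_of_card_eq_finrank (by simp)
  -- write the indicator vector in this basis
  obtain ⟨a, ha⟩ : ∃ a : Fin n → ℝ, ∑ r, a r • U r = one_S := by
    exact (Submodule.mem_span_range_iff_exists_fun ℝ).mp (by rw [hspan]; trivial)
  -- coefficients on K vanish
  have haK : ∀ r ∈ K, a r = 0 := by
    intro r hr
    have h0 : (∑ s, a s • U s) ⬝ᵥ U r = 0 := by
      rw [ha, dotProduct_comm]
      exact hdesign r hr
    rw [sum_dotProduct_aux] at h0
    have : ∀ s, a s • U s ⬝ᵥ U r = if s = r then a r * (U r ⬝ᵥ U r) else 0 := by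
      intro s
      by_cases h : s = r
      · subst h; simp [smul_dotProduct, smul_eq_mul]
      · simp [smul_dotProduct, horth s r h, h]
    rw [Finset.sum_congr rfl (fun s _ => this s), Finset.sum_ite_eq' Finset.univ r] at h0
    simp only [Finset.mem_univ, if_true] at h0
    exact (mul_eq_zero.mp h0).resolve_right (ne_of_gt (hpos r))
  -- the linear functional
  set T := {r : Fin n // r ∉ K}
  set v : Fin n → (T → ℝ) := fun j => fun r : T => U r.1 j with hv
  set P : Set (T → ℝ) := convexHull ℝ (Set.range v) with hP
  set f : (T → ℝ) →ₗ[ℝ] ℝ :=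
    { toFun := fun x => ∑ r : T, a r.1 * x r
      map_add' := by
        intro x y
        simp [mul_add, Finset.sum_add_distrib]
      map_smul' := by
        intro c x
        simp [Finset.mul_sum, smul_eq_mul]
        ring_nf
        congr 1
        ext r
        ring } with hf
  -- key computation: f (v j) = 1_S j
  have hkey : ∀ j, f (v j) = (if j ∈ S then (1 : ℝ) else 0) := by
    intro j
    have h1 : one_S j = ∑ r, a r * U r j := by
      rw [← ha]; simp [Finset.sum_apply]
    have h2 : ∑ r, a r * U r j = ∑ r : T, a r.1 * U r.1 j := by
      rw [← Finset.sum_filter_of_ne (p := fun r => r ∉ K)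
        (fun r _ hne => fun hr => hne (by rw [haK r hr, zero_mul]))]
      exact Finset.sum_subtype _ (by simp) _
    show ∑ r : T, a r.1 * v j r = _
    rw [hv]
    rw [← h2, ← h1]
  -- values of f on P are between 0 and 1
  have hle1 : ∀ y ∈ P, f y ≤ 1 := by
    intro y hy
    have : f y ∈ convexHull ℝ (f '' Set.range v) := by
      rw [← f.image_convexHull]; exact ⟨y, hy, rfl⟩
    have hsub : convexHull ℝ (f '' Set.range v) ⊆ Set.Iic 1 := by
      apply convexHull_min _ (convex_Iic 1)
      rintro _ ⟨_, ⟨j, rfl⟩, rfl⟩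
      rw [hkey j]
      split <;> norm_num
    exact hsub this
  have hge0 : ∀ y ∈ P, 0 ≤ f y := by
    intro y hy
    have : f y ∈ convexHull ℝ (f '' Set.range v) := by
      rw [← f.image_convexHull]; exact ⟨y, hy, rfl⟩
    have hsub : convexHull ℝ (f '' Set.range v) ⊆ Set.Ici 0 := by
      apply convexHull_min _ (convex_Ici 0)
      rintro _ ⟨_, ⟨j, rfl⟩, rfl⟩
      rw [hkey j]
      split <;> norm_num
    exact hsub this
  have hmemP : ∀ j, v j ∈ P := fun j => subset_convexHull ℝ _ ⟨j, rfl⟩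
  intro i
  by_cases hi : i ∈ S
  · -- use the maximizer face of f
    obtain ⟨j, hj⟩ : ∃ j, j ∉ S := by
      by_contra h
      push_neg at h
      exact hSproper (Set.eq_univ_of_forall h)
    refine ⟨{x ∈ P | ∀ y ∈ P, f y ≤ f x}, Or.inr ⟨f, rfl⟩, ?_, ?_⟩
    · intro hEq
      have hjF : v j ∈ {x ∈ P | ∀ y ∈ P, f y ≤ f x} := by rw [hEq]; exact hmemP j
      have := hjF.2 (v i) (hmemP i)
      rw [hkey i, hkey j, if_pos hi, if_neg hj] at this
      linarith
    · refine ⟨hmemP i, fun y hy => ?_⟩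
      rw [hkey i, if_pos hi]
      exact hle1 y hy
  · -- use the minimizer face of f, i.e. maximizer of -f
    obtain ⟨j, hj⟩ := hSne
    refine ⟨{x ∈ P | ∀ y ∈ P, (-f) y ≤ (-f) x}, Or.inr ⟨-f, rfl⟩, ?_, ?_⟩
    · intro hEq
      have hjF : v j ∈ {x ∈ P | ∀ y ∈ P, (-f) y ≤ (-f) x} := by rw [hEq]; exact hmemP j
      have := hjF.2 (v i) (hmemP i)
      simp only [LinearMap.neg_apply] at this
      rw [hkey i, hkey j, if_pos hj, if_neg hi] at this
      linarith
    · refine ⟨hmemP i, fun y hy => ?_⟩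
      simp only [LinearMap.neg_apply]
      rw [hkey i, if_neg hi]
      have := hge0 y hy
      linarith
end
end

section
/- Let B ∈ ℝ^{n×n} be orthogonal with first row 𝟙/√n, and let M = Diag(0, λ_2, …, λ_n) with all λ_i > 0. Set L = B^T M B and A = Diag(L) - L. Then: (1) L is positive semidefinite; (2) L𝟙 = 0; (3) A is symmetric with zero diagonal; (4) the diagonal entries of L equal the row sums of A, so that if A ≥ 0 entrywise then L is the Laplacian of a positively weighted graph; and (5) the kernel of L is exactly span{𝟙}, so this graph is connected. -/
open Matrix

/-- Construction of a Laplacian from an orthogonal matrix.  Let `B` be an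
orthogonal `n × n` matrix whose first row is `𝟙/√n`, and let
`M = Diag(0, λ₂, …, λₙ)` with all `λᵢ > 0` (for `i ≠ 0`).  Set `L = Bᵀ M B`
and `A = Diag(L) - L`.  Then:
(1) `L` is positive semidefinite;
(2) `L𝟙 = 0`;
(3) `A` is symmetric with zero diagonal;
(4) the diagonal entries of `L` are the row sums of `A` (so if `A ≥ 0`
    entrywise then `L` is the Laplacian of a positively weighted graph); and
(5) `ker L = span{𝟙}`, so that graph is connected. -/
theorem orthogonal_basis_laplacian (n : ℕ) (hn : 0 < n)
    (B : Matrix (Fin n) (Fin n) ℝ)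
    (hB : B * B.transpose = 1)
    (hone : B ⟨0, hn⟩ = fun _ => 1 / Real.sqrt n)
    (lam : Fin n → ℝ) (hlam0 : lam ⟨0, hn⟩ = 0)
    (hlampos : ∀ i, i ≠ (⟨0, hn⟩ : Fin n) → 0 < lam i) :
    let L := B.transpose * Matrix.diagonal lam * B
    let A := Matrix.diagonal (fun i => L i i) - L
    (∀ x : Fin n → ℝ, 0 ≤ x ⬝ᵥ (L *ᵥ x)) ∧
    (L *ᵥ (fun _ => (1 : ℝ)) = 0) ∧
    (∀ i j, A i j = A j i) ∧ (∀ i, A i i = 0) ∧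
    (∀ i, L i i = ∑ j, A i j) ∧
    ({x : Fin n → ℝ | L *ᵥ x = 0} =
      (Submodule.span ℝ {(fun _ => (1 : ℝ) : Fin n → ℝ)} : Submodule ℝ (Fin n → ℝ))) := by
  intro L A
  set e0 : Fin n → ℝ := Pi.single (⟨0, hn⟩ : Fin n) 1 with he0
  have hsqrt : Real.sqrt n ≠ 0 := by positivity
  have hlamnn : ∀ i, 0 ≤ lam i := by
    intro i
    by_cases h : i = (⟨0, hn⟩ : Fin n)
    · rw [h, hlam0]
    · exact (hlampos i h).le
  have hBtB : B.transpose * B = 1 := by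
    rw [mul_eq_one_comm] at hB; exact hB
  -- quadratic form
  have hquad : ∀ x : Fin n → ℝ,
      x ⬝ᵥ (L *ᵥ x) = ∑ i, lam i * (B *ᵥ x) i * (B *ᵥ x) i := by
    intro x
    show x ⬝ᵥ ((B.transpose * Matrix.diagonal lam * B) *ᵥ x) = _
    rw [← mulVec_mulVec, ← mulVec_mulVec, dotProduct_mulVec, vecMul_transpose]
    simp only [dotProduct, mulVec_diagonal]
    exact Finset.sum_congr rfl fun i _ => by ring
  have hBte0 : B.transpose *ᵥ e0 = fun _ => 1 / Real.sqrt n := by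
    funext i
    rw [he0, mulVec_single]
    simp only [Pi.smul_apply, col_apply, MulOpposite.op_one, one_smul, transpose_apply, mul_one, hone]
  -- B *ᵥ 𝟙 = √n • e₀
  have hB1 : B *ᵥ (fun _ => (1 : ℝ)) = Real.sqrt n • e0 := by
    have hones : (fun _ => (1 : ℝ) : Fin n → ℝ)
        = B.transpose *ᵥ (Real.sqrt n • e0) := by
      rw [mulVec_smul, hBte0]
      funext i
      simp only [Pi.smul_apply, smul_eq_mul]
      field_simp
    rw [hones, mulVec_mulVec, hB, one_mulVec]
  -- L 𝟙 = 0
  have hL1 : L *ᵥ (fun _ => (1 : ℝ)) = 0 := by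
    show (B.transpose * Matrix.diagonal lam * B) *ᵥ _ = 0
    rw [← mulVec_mulVec, ← mulVec_mulVec, hB1, mulVec_smul]
    have hd : Matrix.diagonal lam *ᵥ e0 = 0 := by
      funext i
      simp only [mulVec_diagonal, Pi.zero_apply, he0]
      by_cases h : i = (⟨0, hn⟩ : Fin n)
      · subst h; rw [hlam0]; ring
      · rw [Pi.single_eq_of_ne h]; ring
    rw [hd, smul_zero, mulVec_zero]
  -- L is symmetric
  have hLsymm : ∀ i j, L i j = L j i := by
    intro i j
    have h : L.transpose = L := by
      show (B.transpose * Matrix.diagonal lam * B).transpose = _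
      rw [transpose_mul, transpose_mul, transpose_transpose, diagonal_transpose,
        ← Matrix.mul_assoc]
    calc L i j = L.transpose j i := rfl
    _ = L j i := by rw [h]
  -- row sums of L vanish
  have hrow : ∀ i, ∑ j, L i j = 0 := by
    intro i
    have := congrFun hL1 i
    simpa [mulVec, dotProduct] using this
  refine ⟨?_, hL1, ?_, ?_, ?_, ?_⟩
  · intro x
    rw [hquad]
    apply Finset.sum_nonneg
    intro i _
    have := hlamnn i
    nlinarith [sq_nonneg ((B *ᵥ x) i)]
  · intro i j
    show Matrix.diagonal _ i j - L i j = Matrix.diagonal _ j i - L j i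
    rw [hLsymm i j]
    by_cases h : i = j
    · subst h; rfl
    · rw [Matrix.diagonal_apply_ne _ h, Matrix.diagonal_apply_ne _ (Ne.symm h)]
  · intro i
    show Matrix.diagonal _ i i - L i i = 0
    rw [Matrix.diagonal_apply_eq]; ring
  · intro i
    have h : ∑ j, A i j = ∑ j, (Matrix.diagonal (fun k => L k k) i j - L i j) := rfl
    rw [h, Finset.sum_sub_distrib, hrow i, sub_zero]
    rw [Finset.sum_eq_single i]
    · rw [Matrix.diagonal_apply_eq]
    · intro b _ hb; exact Matrix.diagonal_apply_ne _ (Ne.symm hb)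
    · intro h; exact absurd (Finset.mem_univ i) h
  · ext x
    simp only [Set.mem_setOf_eq, SetLike.mem_coe, Submodule.mem_span_singleton]
    constructor
    · intro hx
      have hq0 : ∑ i, lam i * (B *ᵥ x) i * (B *ᵥ x) i = 0 := by
        rw [← hquad x, hx, dotProduct_zero]
      have hterm : ∀ i ∈ Finset.univ, (0:ℝ) ≤ lam i * (B *ᵥ x) i * (B *ᵥ x) i := by
        intro i _
        have := hlamnn i
        nlinarith [sq_nonneg ((B *ᵥ x) i)]
      have hzero : ∀ i, i ≠ (⟨0, hn⟩ : Fin n) → (B *ᵥ x) i = 0 := by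
        intro i hi
        have h := (Finset.sum_eq_zero_iff_of_nonneg hterm).mp hq0 i (Finset.mem_univ i)
        have hpos := hlampos i hi
        by_contra hne
        have hvpos : 0 < (B *ᵥ x) i * (B *ᵥ x) i := mul_self_pos.mpr hne
        nlinarith
      -- Bx = (Bx)₀ • e₀
      have hBx : B *ᵥ x = (B *ᵥ x) (⟨0, hn⟩ : Fin n) • e0 := by
        funext i
        by_cases h : i = (⟨0, hn⟩ : Fin n)
        · subst h; simp [he0]
        · rw [hzero i h]; simp [he0, Pi.single_eq_of_ne h]
      refine ⟨(B *ᵥ x) (⟨0, hn⟩ : Fin n) / Real.sqrt n, ?_⟩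
      have hx2 : x = B.transpose *ᵥ (B *ᵥ x) := by
        rw [mulVec_mulVec, hBtB, one_mulVec]
      have hx3 : x = ((B *ᵥ x) (⟨0, hn⟩ : Fin n)) •
          (fun _ => 1 / Real.sqrt n : Fin n → ℝ) := by
        conv_lhs => rw [hx2, hBx]
        rw [mulVec_smul, hBte0]
      funext i
      have h4 := congrFun hx3 i
      simp only [Pi.smul_apply, smul_eq_mul] at h4 ⊢
      rw [h4]
      field_simp
    · rintro ⟨c, rfl⟩
      rw [mulVec_smul, hL1, smul_zero]
end

section
/- Let {φ_1 = 𝟙/√n, φ_2, …, φ_n} be an orthonormal basis of ℝ^n, partitioned into parts π_1 = {φ_1}, π_2, …, π_m with m ≥ 2. Then there exist positive reals λ_2, …, λ_n, with λ_i = λ_j exactly when φ_i, φ_j lie in the same part, such that L = Σ_{j=2}^n λ_j φ_j φ_j^T has all off-diagonal entries ≤ 0. Hence L is the Laplacian of a connected positively weighted graph on n vertices whose eigenspaces are the spans of the parts π_1, …, π_m. -/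
open Matrix

/-- Lemma (orthonormal basis to graph).  Let `{φ₀ = 𝟙/√n, φ₁, …, φ_{n-1}}` be an
orthonormal basis of `ℝⁿ`, partitioned by `p : Fin n → Fin m` into `m ≥ 2`
parts with `π₀ = {φ₀}` a part by itself.  Then there are positive reals
`λᵢ > 0` for `i ≠ 0` (and `λ₀ = 0`), equal exactly when the corresponding
basis vectors lie in the same part, such that `L = Σⱼ λⱼ φⱼφⱼᵀ` has all
off-diagonal entries `≤ 0`.  Hence `L` is the Laplacian of a connected
positively weighted graph on `n` vertices (symmetric, PSD by construction,
nonpositive off the diagonal, kernel exactly `span{𝟙}`) whose eigenspaces are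
the spans of the parts (each `φⱼ` is an eigenvector with eigenvalue `λⱼ`). -/
theorem onb_partition_to_graph (n m : ℕ) (hn : 0 < n) (hm : 2 ≤ m)
    (φ : Fin n → Fin n → ℝ)
    (horth : ∀ i j, φ i ⬝ᵥ φ j = if i = j then 1 else 0)
    (hone : φ ⟨0, hn⟩ = fun _ => 1 / Real.sqrt n)
    (p : Fin n → Fin m) (hsurj : Function.Surjective p)
    (hpart1 : ∀ i, p i = ⟨0, by omega⟩ ↔ i = ⟨0, hn⟩) :
    ∃ lam : Fin n → ℝ,
      lam ⟨0, hn⟩ = 0 ∧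
      (∀ i, i ≠ (⟨0, hn⟩ : Fin n) → 0 < lam i) ∧
      (∀ i j, lam i = lam j ↔ p i = p j) ∧
      (let L : Matrix (Fin n) (Fin n) ℝ := ∑ j, lam j • Matrix.vecMulVec (φ j) (φ j);
        (∀ i j, i ≠ j → L i j ≤ 0) ∧
        (∀ i j, L i j = L j i) ∧
        (∀ x : Fin n → ℝ, 0 ≤ x ⬝ᵥ (L *ᵥ x)) ∧
        (∀ j, L *ᵥ φ j = lam j • φ j) ∧
        ({x : Fin n → ℝ | L *ᵥ x = 0} =
          (Submodule.span ℝ {(fun _ => (1 : ℝ) : Fin n → ℝ)} : Submodule ℝ (Fin n → ℝ)))) := by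
  have hnR : (0:ℝ) < n := by exact_mod_cast hn
  have hmR : (0:ℝ) < m := by exact_mod_cast (by omega : 0 < m)
  set z : Fin n := ⟨0, hn⟩ with hzdef
  set ε : ℝ := 1 / (n * m) with hεdef
  have hε : 0 < ε := by rw [hεdef]; positivity
  set lam : Fin n → ℝ := fun i => if i = z then 0 else 1 + ε * ((p i : ℕ) : ℝ) with hlamdef
  have hlamz : lam z = 0 := by simp [hlamdef]
  have hlampos : ∀ i, i ≠ z → 0 < lam i := by
    intro i hi
    simp only [hlamdef, if_neg hi]
    positivity
  have hlamnonneg : ∀ i, 0 ≤ lam i := by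
    intro i
    by_cases hi : i = z
    · simp [hi, hlamz]
    · exact (hlampos i hi).le
  -- column orthonormality
  have hcol : ∀ i j, ∑ k, φ k i * φ k j = if i = j then 1 else 0 := by
    have h1 : (Matrix.of φ) * (Matrix.of φ)ᵀ = 1 := by
      ext i j
      simpa [Matrix.mul_apply, Matrix.one_apply, dotProduct] using horth i j
    have h2 : (Matrix.of φ)ᵀ * (Matrix.of φ) = 1 := mul_eq_one_comm.mp h1
    intro i j
    have := congrFun (congrFun h2 i) j
    simpa [Matrix.mul_apply, Matrix.one_apply] using this
  set E : Matrix (Fin n) (Fin n) ℝ := ∑ j, lam j • Matrix.vecMulVec (φ j) (φ j) with hEdef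
  have hE : ∀ i j, E i j = ∑ k, lam k * (φ k i * φ k j) := by
    intro i j
    simp [hEdef, Matrix.sum_apply, Matrix.vecMulVec_apply, mul_assoc]
  have hmulVec : ∀ (x : Fin n → ℝ) i, (E *ᵥ x) i = ∑ k, lam k * φ k i * (φ k ⬝ᵥ x) := by
    intro x i
    simp only [Matrix.mulVec, dotProduct, hE]
    simp_rw [Finset.sum_mul]
    rw [Finset.sum_comm]
    apply Finset.sum_congr rfl
    intro k _
    rw [mul_assoc, Finset.mul_sum, Finset.mul_sum]
    apply Finset.sum_congr rfl
    intro j _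
    ring
  -- eigenvector property
  have heig : ∀ j, E *ᵥ φ j = lam j • φ j := by
    intro j
    funext i
    rw [hmulVec]
    simp only [horth, mul_ite, mul_one, mul_zero]
    simp [Finset.sum_ite_eq, Pi.smul_apply, smul_eq_mul, mul_comm]
  -- symmetry
  have hsym : ∀ i j, E i j = E j i := by
    intro i j
    rw [hE, hE]
    apply Finset.sum_congr rfl
    intro k _
    ring
  -- PSD
  have hpsd : ∀ x : Fin n → ℝ, 0 ≤ x ⬝ᵥ (E *ᵥ x) := by
    intro x
    have hq : x ⬝ᵥ (E *ᵥ x) = ∑ k, lam k * (φ k ⬝ᵥ x) ^ 2 := by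
      have h0 : x ⬝ᵥ (E *ᵥ x) = ∑ i, x i * (E *ᵥ x) i := rfl
      rw [h0]
      simp_rw [hmulVec, Finset.mul_sum]
      rw [Finset.sum_comm]
      apply Finset.sum_congr rfl
      intro k _
      have hd : (φ k ⬝ᵥ x) = ∑ i, φ k i * x i := rfl
      calc ∑ i, x i * (lam k * φ k i * (φ k ⬝ᵥ x))
          = lam k * (φ k ⬝ᵥ x) * ∑ i, φ k i * x i := by
            rw [Finset.mul_sum]
            apply Finset.sum_congr rfl
            intro i _
            ring
        _ = lam k * (φ k ⬝ᵥ x) ^ 2 := by rw [← hd]; ring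
    rw [hq]
    apply Finset.sum_nonneg
    intro k _
    exact mul_nonneg (hlamnonneg k) (sq_nonneg _)
  -- off-diagonal
  have hsq : ∀ i, ∑ k, φ k i ^ 2 = 1 := by
    intro i
    simpa [pow_two] using hcol i i
  have hCS : ∀ i j, ∑ k, |φ k i| * |φ k j| ≤ 1 := by
    intro i j
    have h1 := Finset.sum_mul_sq_le_sq_mul_sq Finset.univ (fun k => |φ k i|) (fun k => |φ k j|)
    have h2 : (∑ k, |φ k i| * |φ k j|) ^ 2 ≤ 1 := by
      simpa [sq_abs, hsq] using h1
    have h3 : 0 ≤ ∑ k, |φ k i| * |φ k j| :=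
      Finset.sum_nonneg fun k _ => mul_nonneg (abs_nonneg _) (abs_nonneg _)
    nlinarith
  have hoff : ∀ i j, i ≠ j → E i j ≤ 0 := by
    intro i j hij
    rw [hE]
    have hzi : φ z i = 1 / Real.sqrt n := by rw [hone]
    have hzj : φ z j = 1 / Real.sqrt n := by rw [hone]
    have hpz : ((p z : ℕ) : ℝ) = 0 := by
      have := (hpart1 z).mpr rfl
      simp [this]
    have hlamalt : ∀ k, lam k
        = (1 + ε * ((p k : ℕ) : ℝ)) - (if k = z then 1 else 0) := by
      intro k
      by_cases hk : k = z
      · subst hk; rw [hlamz, hpz]; simp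
      · simp [hlamdef, hk]
    have hΦsum : ∑ k, φ k i * φ k j = 0 := by
      rw [hcol i j, if_neg hij]
    have hzz : φ z i * φ z j = 1 / n := by
      rw [hzi, hzj]
      rw [div_mul_div_comm, one_mul, Real.mul_self_sqrt hnR.le]
    have hsplit : ∑ k, lam k * (φ k i * φ k j)
        = ∑ k, (1 + ε * ((p k : ℕ) : ℝ)) * (φ k i * φ k j)
          - φ z i * φ z j := by
      calc ∑ k, lam k * (φ k i * φ k j)
          = ∑ k, ((1 + ε * ((p k : ℕ) : ℝ)) * (φ k i * φ k j)
              - (if k = z then 1 else 0) * (φ k i * φ k j)) := by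
            apply Finset.sum_congr rfl
            intro k _
            rw [hlamalt k, sub_mul]
        _ = ∑ k, (1 + ε * ((p k : ℕ) : ℝ)) * (φ k i * φ k j)
              - ∑ k, (if k = z then 1 else 0) * (φ k i * φ k j) :=
            Finset.sum_sub_distrib _ _
        _ = ∑ k, (1 + ε * ((p k : ℕ) : ℝ)) * (φ k i * φ k j)
              - φ z i * φ z j := by
            congr 1
            simp [ite_mul]
    rw [hsplit]
    have hR : ∑ k, ε * ((p k : ℕ) : ℝ) * (φ k i * φ k j) ≤ ε * m := by
      calc ∑ k, ε * ((p k : ℕ) : ℝ) * (φ k i * φ k j)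
          ≤ ∑ k, ε * m * (|φ k i| * |φ k j|) := by
            apply Finset.sum_le_sum
            intro k _
            have h1 : φ k i * φ k j ≤ |φ k i| * |φ k j| := by
              rw [← abs_mul]; exact le_abs_self _
            have h2 : ((p k : ℕ) : ℝ) ≤ m := by
              exact_mod_cast (p k).2.le
            have h3 : (0:ℝ) ≤ ((p k : ℕ) : ℝ) := by positivity
            have h4 : ε * ((p k : ℕ) : ℝ) * (φ k i * φ k j)
                ≤ ε * ((p k : ℕ) : ℝ) * (|φ k i| * |φ k j|) :=
              mul_le_mul_of_nonneg_left h1 (by positivity)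
            have h5 : ε * ((p k : ℕ) : ℝ) * (|φ k i| * |φ k j|)
                ≤ ε * m * (|φ k i| * |φ k j|) := by
              apply mul_le_mul_of_nonneg_right _
                (mul_nonneg (abs_nonneg _) (abs_nonneg _))
              exact mul_le_mul_of_nonneg_left h2 hε.le
            linarith
        _ = ε * m * ∑ k, |φ k i| * |φ k j| := by rw [Finset.mul_sum]
        _ ≤ ε * m * 1 := by
            apply mul_le_mul_of_nonneg_left (hCS i j)
            positivity
        _ = ε * m := mul_one _
    have hεm : ε * m = 1 / n := by
      rw [hεdef]
      field_simp
    have hexp : ∑ k, (1 + ε * ((p k : ℕ) : ℝ)) * (φ k i * φ k j)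
        = ∑ k, (φ k i * φ k j) + ∑ k, ε * ((p k : ℕ) : ℝ) * (φ k i * φ k j) := by
      rw [← Finset.sum_add_distrib]
      apply Finset.sum_congr rfl
      intro k _
      ring
    rw [hexp, hΦsum, hzz]
    have : ∑ k, ε * ((p k : ℕ) : ℝ) * (φ k i * φ k j) ≤ 1 / n := hεm ▸ hR
    linarith
  -- kernel
  have hker : {x : Fin n → ℝ | E *ᵥ x = 0} =
      (Submodule.span ℝ {(fun _ => (1 : ℝ) : Fin n → ℝ)} : Submodule ℝ (Fin n → ℝ)) := by
    ext x
    simp only [Set.mem_setOf_eq, SetLike.mem_coe, Submodule.mem_span_singleton]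
    constructor
    · intro hx
      have hcoef : ∀ k, k ≠ z → φ k ⬝ᵥ x = 0 := by
        intro k hk
        have h1 : φ k ⬝ᵥ (E *ᵥ x) = lam k * (φ k ⬝ᵥ x) := by
          have h0 : φ k ⬝ᵥ (E *ᵥ x) = ∑ i, φ k i * (E *ᵥ x) i := rfl
          rw [h0]
          simp_rw [hmulVec, Finset.mul_sum]
          rw [Finset.sum_comm]
          calc ∑ k', ∑ i, φ k i * (lam k' * φ k' i * (φ k' ⬝ᵥ x))
              = ∑ k', lam k' * (φ k' ⬝ᵥ x) * ∑ i, φ k i * φ k' i := by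
                apply Finset.sum_congr rfl
                intro k' _
                rw [Finset.mul_sum]
                apply Finset.sum_congr rfl
                intro i _
                ring
            _ = lam k * (φ k ⬝ᵥ x) := by
                have hdk : ∀ k', (∑ i, φ k i * φ k' i) = if k = k' then 1 else 0 := by
                  intro k'
                  simpa [dotProduct] using horth k k'
                simp only [hdk, mul_ite, mul_one, mul_zero]
                simp [Finset.sum_ite_eq]
        rw [hx] at h1
        simp only [dotProduct, Pi.zero_apply, mul_zero, Finset.sum_const_zero] at h1
        have := hlampos k hk
        have h2 : lam k * (φ k ⬝ᵥ x) = 0 := h1.symm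
        rcases mul_eq_zero.mp h2 with h | h
        · exact absurd h this.ne'
        · exact h
      -- reconstruction
      have hrec : ∀ i, x i = ∑ k, φ k i * (φ k ⬝ᵥ x) := by
        intro i
        calc x i = ∑ j, (if i = j then 1 else 0) * x j := by
              simp [Finset.sum_ite_eq, Finset.mem_univ]
          _ = ∑ j, (∑ k, φ k i * φ k j) * x j := by
              simp_rw [hcol]
          _ = ∑ k, φ k i * (φ k ⬝ᵥ x) := by
              simp_rw [Finset.sum_mul]
              rw [Finset.sum_comm]
              apply Finset.sum_congr rfl
              intro k _
              simp only [dotProduct]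
              rw [Finset.mul_sum]
              apply Finset.sum_congr rfl
              intro j _
              ring
      refine ⟨(φ z ⬝ᵥ x) * (1 / Real.sqrt n), ?_⟩
      funext i
      have : x i = φ z i * (φ z ⬝ᵥ x) := by
        rw [hrec i, Finset.sum_eq_single z]
        · intro k _ hk
          rw [hcoef k hk, mul_zero]
        · intro h
          exact absurd (Finset.mem_univ z) h
      rw [Pi.smul_apply, smul_eq_mul]
      rw [this, hone]
      ring
    · rintro ⟨a, rfl⟩
      have hones : (fun _ => (1:ℝ) : Fin n → ℝ) = Real.sqrt n • φ z := by
        funext i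
        rw [hone]
        simp only [Pi.smul_apply, smul_eq_mul]
        rw [mul_one_div, div_self (Real.sqrt_ne_zero'.mpr hnR)]
      rw [hones, Matrix.mulVec_smul, Matrix.mulVec_smul, heig z, hlamz]
      simp
  refine ⟨lam, hlamz, hlampos, ?_, hoff, hsym, hpsd, heig, hker⟩
  -- lambda equality iff same part
  intro i j
  have hpz' : ∀ k, k ≠ z → p k ≠ ⟨0, by omega⟩ := by
    intro k hk hc
    exact hk ((hpart1 k).mp hc)
  by_cases hi : i = z <;> by_cases hj : j = z
  · subst hi; subst hj; simp
  · subst hi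
    constructor
    · intro h
      exfalso
      rw [hlamz] at h
      exact (hlampos j hj).ne' h.symm
    · intro h
      exfalso
      have : p z = ⟨0, by omega⟩ := (hpart1 z).mpr rfl
      rw [this] at h
      exact hpz' j hj h.symm
  · subst hj
    constructor
    · intro h
      exfalso
      rw [hlamz] at h
      exact (hlampos i hi).ne' h
    · intro h
      exfalso
      have : p z = ⟨0, by omega⟩ := (hpart1 z).mpr rfl
      rw [this] at h
      exact hpz' i hi h
  · simp only [hlamdef, if_neg hi, if_neg hj]
    constructor
    · intro h
      have h2 : ε * ((p i : ℕ) : ℝ) = ε * ((p j : ℕ) : ℝ) := by linarith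
      have h3 : ((p i : ℕ) : ℝ) = ((p j : ℕ) : ℝ) :=
        mul_left_cancel₀ hε.ne' h2
      have h4 : (p i : ℕ) = (p j : ℕ) := by exact_mod_cast h3
      exact Fin.ext h4
    · intro h
      rw [h]
end

section
/- For the barbell graph B_n (two copies of K_n with all edge weights 1, joined by a single edge of weight w > 0 between vertex n and vertex n+1), the vector [𝟙_{n-1}, α, -α, -𝟙_{n-1}] is a Laplacian eigenvector with eigenvalue 1 - α, where α = ( -(2w+n-2) + √((2w+n-2)² + 4(n-1)) )/2; moreover 1 - α ∈ (0,1) for all w > 0. -/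
open Matrix

/-- The weight matrix of the barbell graph `B_n`: two copies of `K_n` (all
edge weights `1`), joined by a single edge of weight `w` between the last
vertex `b` of the first clique (vertex `n`) and the vertex `b` of the second
clique (vertex `n+1`). -/
def barbellW (n : ℕ) (hn : 0 < n) (w : ℝ) :
    Matrix (Fin n ⊕ Fin n) (Fin n ⊕ Fin n) ℝ :=
  fun u v =>
    match u, v with
    | .inl i, .inl j => if i = j then 0 else 1
    | .inr i, .inr j => if i = j then 0 else 1
    | .inl i, .inr j => if i = ⟨n - 1, by omega⟩ ∧ j = ⟨n - 1, by omega⟩ then w else 0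
    | .inr i, .inl j => if i = ⟨n - 1, by omega⟩ ∧ j = ⟨n - 1, by omega⟩ then w else 0

/-- The Laplacian `L = D - A` of the barbell graph `B_n`. -/
def barbellLap (n : ℕ) (hn : 0 < n) (w : ℝ) :
    Matrix (Fin n ⊕ Fin n) (Fin n ⊕ Fin n) ℝ :=
  Matrix.diagonal (fun u => ∑ v, barbellW n hn w u v) - barbellW n hn w

/-!
At a vertex of either clique other than the bridge vertex, the eigenvalue equation
`(L v)_u = (1 - α) v_u` holds for every `α`; at the two bridge vertices it is exactly the
quadratic `α² + (2w + n - 2) α = n - 1`, whose positive root is the chosen `α`. A root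
`(-b + √(b² + 4c)) / 2` of `X² + bX - c` lies in `(0, 1)` as soon as `0 < c < b + 1`, which here
reads `0 < n - 1 < 2w + n - 1`.
-/

open Finset

noncomputable def posRoot (b c : ℝ) : ℝ := (-b + √(b ^ 2 + 4 * c)) / 2

lemma posRoot_sq_add_mul {b c : ℝ} (h : 0 ≤ b ^ 2 + 4 * c) :
    posRoot b c ^ 2 + b * posRoot b c = c := by
  unfold posRoot
  linear_combination (Real.sq_sqrt h) / 4

lemma posRoot_pos {b c : ℝ} (hc : 0 < c) : 0 < posRoot b c := by
  have hb : b < √(b ^ 2 + 4 * c) := Real.lt_sqrt_of_sq_lt (by linarith)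
  unfold posRoot
  linarith

lemma posRoot_lt_one {b c : ℝ} (hc : 0 < c) (hcb : c < b + 1) : posRoot b c < 1 := by
  have : √(b ^ 2 + 4 * c) < b + 2 :=
    (Real.sqrt_lt' (by linarith)).2 (by nlinarith)
  unfold posRoot
  linarith

lemma rowSum_diagonal_sub_mulVec_apply {ι R : Type*} [Fintype ι] [DecidableEq ι] [CommRing R]
    (W : Matrix ι ι R) (x : ι → R) (u : ι) :
    (((diagonal fun u => ∑ v, W u v) - W) *ᵥ x) u = ∑ v, W u v * (x u - x v) := by
  rw [sub_mulVec, Pi.sub_apply, mulVec_diagonal]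
  simp only [mulVec, dotProduct, mul_sub, sum_mul, sum_sub_distrib]

lemma sum_ite_eq_zero_one_mul_sub {ι R : Type*} [Fintype ι] [DecidableEq ι] [CommRing R]
    (f : ι → R) (i : ι) :
    ∑ j, (if i = j then 0 else 1) * (f i - f j) = Fintype.card ι • f i - ∑ j, f j := by
  have : ∀ j, (if i = j then 0 else 1) * (f i - f j) = f i - f j := by
    intro j
    split_ifs with h <;> simp [h]
  simp [this, sum_sub_distrib]

lemma sum_ite_and_eq_mul {ι R : Type*} [Fintype ι] [DecidableEq ι] [CommRing R]
    (i k : ι) (w : R) (g : ι → R) :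
    ∑ j, (if i = k ∧ j = k then w else 0) * g j = if i = k then w * g k else 0 := by
  by_cases hi : i = k <;> simp [hi]

lemma sum_ite_eq_add_card_sub_one_mul {ι R : Type*} [Fintype ι] [DecidableEq ι] [CommRing R]
    (k : ι) (a c : R) :
    ∑ j, (if j = k then a else c) = a + (Fintype.card ι - 1) * c := by
  have : ∀ j, (if j = k then a else c) = c + if j = k then a - c else 0 := by
    intro j
    split_ifs <;> ring
  simp only [this, sum_add_distrib, sum_ite_eq', mem_univ, if_true, sum_const, card_univ,
    nsmul_eq_mul]
  ring

section barbell

variable {n : ℕ} (hn : 0 < n) (w : ℝ) (f g : Fin n → ℝ) (i : Fin n)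

lemma barbellLap_mulVec_inl :
    (barbellLap n hn w *ᵥ Sum.elim f g) (.inl i) =
      n * f i - ∑ j, f j + if i = ⟨n - 1, by omega⟩ then w * (f i - g i) else 0 := by
  rw [barbellLap, rowSum_diagonal_sub_mulVec_apply, Fintype.sum_sum_type]
  simp only [barbellW, Sum.elim_inl, Sum.elim_inr]
  rw [sum_ite_eq_zero_one_mul_sub, sum_ite_and_eq_mul, Fintype.card_fin, nsmul_eq_mul]
  split_ifs with h
  · subst h
    ring
  · ring

lemma barbellLap_mulVec_inr :
    (barbellLap n hn w *ᵥ Sum.elim f g) (.inr i) =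
      n * g i - ∑ j, g j + if i = ⟨n - 1, by omega⟩ then w * (g i - f i) else 0 := by
  rw [barbellLap, rowSum_diagonal_sub_mulVec_apply, Fintype.sum_sum_type]
  simp only [barbellW, Sum.elim_inl, Sum.elim_inr]
  rw [sum_ite_eq_zero_one_mul_sub, sum_ite_and_eq_mul, Fintype.card_fin, nsmul_eq_mul]
  split_ifs with h
  · subst h
    ring
  · ring

end barbell

/-- For the barbell graph `B_n` with connecting-edge weight `w > 0`, the
vector `[𝟙_{n-1}, α, -α, -𝟙_{n-1}]` (equal to `1` on the non-bridge vertices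
of the first clique, `α` at its bridge vertex, `-α` at the bridge vertex of
the second clique, and `-1` on its remaining vertices) is a Laplacian
eigenvector with eigenvalue `1 - α`, where
`α = (-(2w+n-2) + √((2w+n-2)² + 4(n-1)))/2`; moreover `1 - α ∈ (0,1)`. -/
theorem barbell_eigenvector (n : ℕ) (hn : 2 ≤ n) (w : ℝ) (hw : 0 < w) :
    let α : ℝ := (-(2 * w + n - 2) + Real.sqrt ((2 * w + n - 2) ^ 2 + 4 * (n - 1))) / 2
    let v : Fin n ⊕ Fin n → ℝ :=
      Sum.elim (fun i => if i = ⟨n - 1, by omega⟩ then α else 1)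
        (fun i => if i = ⟨n - 1, by omega⟩ then -α else -1)
    barbellLap n (by omega) w *ᵥ v = (1 - α) • v ∧ 0 < 1 - α ∧ 1 - α < 1 := by
  intro α v
  have hn_sub_one : (0 : ℝ) < n - 1 := by
    have : (2 : ℝ) ≤ n := by exact_mod_cast hn
    linarith
  have hα : α ^ 2 + (2 * w + n - 2) * α = n - 1 := posRoot_sq_add_mul (by positivity)
  have hα_pos : 0 < α := posRoot_pos hn_sub_one
  have hα_lt_one : α < 1 := posRoot_lt_one hn_sub_one (by linarith)
  refine ⟨?_, by linarith, by linarith⟩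
  funext u
  rcases u with i | i
  · rw [barbellLap_mulVec_inl]
    simp only [v, Sum.elim_inl, sum_ite_eq_add_card_sub_one_mul, Fintype.card_fin, Pi.smul_apply, smul_eq_mul]
    split_ifs
    · linear_combination hα
    · ring
  · rw [barbellLap_mulVec_inr]
    simp only [v, Sum.elim_inr, sum_ite_eq_add_card_sub_one_mul, Fintype.card_fin, Pi.smul_apply, smul_eq_mul]
    split_ifs
    · linear_combination -hα
    · ring
end

section
/- For the barbell graph B_n with n > 3 (eigenspace Λ_3 of eigenvalue n spanned by the vectors e_i - e_{i+1} and e_{n+1+i} - e_{n+2+i} for i = 1,…,n-2, together with [𝟙_{n-1}, 1-n, 1-n, 𝟙_{n-1}]), the support-minimal nonnegative nonzero vectors a ∈ ℝ^{2n} orthogonal to Λ_3 are exactly the positive multiples of the four vectors 𝟙_{[n]}, 𝟙_{[n-1]∪{n+1}}, 𝟙_{[2n]\[n]}, and 𝟙_{{n}∪([2n]\[n+1])}. -/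
open Matrix

def bbe {n : ℕ} (v : Fin n ⊕ Fin n) : Fin n ⊕ Fin n → ℝ :=
  fun u => if u = v then 1 else 0

lemma bbe_dot (n : ℕ) (x : Fin n ⊕ Fin n → ℝ) (v w : Fin n ⊕ Fin n) :
    x ⬝ᵥ (bbe v - bbe w) = x v - x w := by
  simp only [dotProduct, Pi.sub_apply, bbe, mul_sub, Finset.sum_sub_distrib,
    mul_ite, mul_one, mul_zero, Finset.sum_ite_eq', Finset.mem_univ, if_true]

lemma const_of_steps (n : ℕ) (hn : 3 < n) (f : Fin n → ℝ)
    (h : ∀ k : ℕ, (hk : k < n - 2) → f ⟨k, by omega⟩ = f ⟨k + 1, by omega⟩) :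
    ∀ (m : ℕ) (hm : m < n), m ≠ n - 1 → f ⟨m, hm⟩ = f ⟨0, by omega⟩ := by
  intro m
  induction m with
  | zero => intro _ _; rfl
  | succ m ih =>
    intro hm hne
    have h1 : m < n - 2 := by omega
    exact (h m h1).symm.trans (ih (by omega) (by omega))

lemma sum_weight (n : ℕ) (hn : 3 < n) (b : Fin n) (f : Fin n → ℝ) (L : ℝ)
    (hf : ∀ i, i ≠ b → f i = L) :
    ∑ i, f i * (if i = b then 1 - (n : ℝ) else 1) = ((n : ℝ) - 1) * (L - f b) := by
  rw [Finset.sum_eq_sum_sdiff_singleton_add (Finset.mem_univ b), if_pos rfl]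
  have h1 : ∑ i ∈ Finset.univ \ {b}, f i * (if i = b then 1 - (n : ℝ) else 1)
      = ∑ _i ∈ Finset.univ \ {b}, L := by
    apply Finset.sum_congr rfl
    intro i hi
    have hib : i ≠ b := by simpa using (Finset.mem_sdiff.1 hi).2
    rw [if_neg hib, hf i hib, mul_one]
  have hcard : (Finset.univ \ {b}).card = n - 1 := by
    rw [Finset.card_sdiff_of_subset (by simp), Finset.card_univ, Fintype.card_fin, Finset.card_singleton]
  rw [h1, Finset.sum_const, hcard, nsmul_eq_mul]
  have h2 : ((n - 1 : ℕ) : ℝ) = (n : ℝ) - 1 := by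
    have : 1 ≤ n := by omega
    push_cast [this]; ring
  rw [h2]; ring

/-- For the barbell graph `B_n` with `n > 3`, the eigenspace `Λ₃` (eigenvalue
`n`) is spanned by the consecutive differences `eᵢ - eᵢ₊₁` within the
non-bridge vertices of each clique together with `[𝟙_{n-1}, 1-n, 1-n, 𝟙_{n-1}]`
(value `1` on non-bridge vertices, `1-n` on the two bridge vertices).  The
support-minimal nonnegative nonzero vectors `a ∈ ℝ^{2n}` orthogonal to `Λ₃`
are exactly the positive multiples of the indicator vectors of the four sets
`[n]`, `[n-1] ∪ {n+1}`, `[2n] \ [n]`, and `{n} ∪ {n+2, …, 2n}` (first clique;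
first clique with its bridge vertex swapped for the other bridge vertex;
second clique; second clique with bridge vertices swapped). -/
theorem barbell_minimal_averaging (n : ℕ) (hn : 3 < n) (a : Fin n ⊕ Fin n → ℝ) :
    let b : Fin n := ⟨n - 1, by omega⟩
    let orth : (Fin n ⊕ Fin n → ℝ) → Prop := fun x =>
      (∀ k : Fin (n - 2),
        x ⬝ᵥ (bbe (Sum.inl ⟨k.1, by have := k.2; omega⟩) -
              bbe (Sum.inl ⟨k.1 + 1, by have := k.2; omega⟩)) = 0) ∧
      (∀ k : Fin (n - 2),
        x ⬝ᵥ (bbe (Sum.inr ⟨k.1, by have := k.2; omega⟩) -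
              bbe (Sum.inr ⟨k.1 + 1, by have := k.2; omega⟩)) = 0) ∧
      (x ⬝ᵥ Sum.elim (fun i : Fin n => if i = b then 1 - (n : ℝ) else 1)
            (fun i : Fin n => if i = b then 1 - (n : ℝ) else 1) = 0)
    (0 ≤ a ∧ a ≠ 0 ∧ orth a ∧
        ¬∃ a' : Fin n ⊕ Fin n → ℝ, 0 ≤ a' ∧ a' ≠ 0 ∧ orth a' ∧
          Function.support a' ⊂ Function.support a) ↔
      ∃ t : ℝ, 0 < t ∧
        (a = t • Sum.elim (fun _ : Fin n => (1 : ℝ)) (fun _ : Fin n => (0 : ℝ)) ∨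
         a = t • Sum.elim (fun i : Fin n => if i = b then (0 : ℝ) else 1)
                (fun i : Fin n => if i = b then (1 : ℝ) else 0) ∨
         a = t • Sum.elim (fun _ : Fin n => (0 : ℝ)) (fun _ : Fin n => (1 : ℝ)) ∨
         a = t • Sum.elim (fun i : Fin n => if i = b then (1 : ℝ) else 0)
                (fun i : Fin n => if i = b then (0 : ℝ) else 1)) := by
  intro b orth
  have hb : b = ⟨n - 1, by omega⟩ := rfl
  have hbv : b.1 = n - 1 := rfl
  set i0 : Fin n := ⟨0, by omega⟩ with hi0def
  have hi0b : i0 ≠ b := by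
    intro h
    have := congrArg Fin.val h
    simp [hi0def, hbv] at this
    omega
  have ne_b : ∀ (m : ℕ) (hm : m < n), m ≠ n - 1 → (⟨m, hm⟩ : Fin n) ≠ b := by
    intro m hm hne h
    exact hne ((congrArg Fin.val h).trans hbv)
  have hdot : ∀ (x : Fin n ⊕ Fin n → ℝ) (w : Fin n → ℝ),
      x ⬝ᵥ Sum.elim w w = (∑ i, x (Sum.inl i) * w i) + (∑ i, x (Sum.inr i) * w i) := by
    intro x w
    simp [dotProduct, Fintype.sum_sum_type]
  have hn1 : ((n : ℝ) - 1) ≠ 0 := by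
    have : (3 : ℝ) < n := by exact_mod_cast hn
    linarith
  have orth_iff : ∀ x : Fin n ⊕ Fin n → ℝ, orth x ↔
      ((∀ i : Fin n, i ≠ b → x (Sum.inl i) = x (Sum.inl i0)) ∧
       (∀ i : Fin n, i ≠ b → x (Sum.inr i) = x (Sum.inr i0)) ∧
       x (Sum.inl i0) + x (Sum.inr i0) = x (Sum.inl b) + x (Sum.inr b)) := by
    intro x
    constructor
    · intro hx
      obtain ⟨h1, h2, h3⟩ := hx
      have cl : ∀ i : Fin n, i ≠ b → x (Sum.inl i) = x (Sum.inl i0) := by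
        intro i hib
        have hstep : ∀ k : ℕ, (hk : k < n - 2) →
            (fun j : Fin n => x (Sum.inl j)) ⟨k, by omega⟩ =
            (fun j : Fin n => x (Sum.inl j)) ⟨k + 1, by omega⟩ := by
          intro k hk
          have h := h1 ⟨k, hk⟩
          rw [bbe_dot] at h
          have := sub_eq_zero.mp h
          exact this
        have hiv : i.1 ≠ n - 1 := by
          intro h
          exact hib (Fin.ext (h.trans hbv.symm))
        exact const_of_steps n hn (fun j => x (Sum.inl j)) hstep i.1 i.2 hiv
      have cr : ∀ i : Fin n, i ≠ b → x (Sum.inr i) = x (Sum.inr i0) := by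
        intro i hib
        have hstep : ∀ k : ℕ, (hk : k < n - 2) →
            (fun j : Fin n => x (Sum.inr j)) ⟨k, by omega⟩ =
            (fun j : Fin n => x (Sum.inr j)) ⟨k + 1, by omega⟩ := by
          intro k hk
          have h := h2 ⟨k, hk⟩
          rw [bbe_dot] at h
          have := sub_eq_zero.mp h
          exact this
        have hiv : i.1 ≠ n - 1 := by
          intro h
          exact hib (Fin.ext (h.trans hbv.symm))
        exact const_of_steps n hn (fun j => x (Sum.inr j)) hstep i.1 i.2 hiv
      refine ⟨cl, cr, ?_⟩
      rw [hdot, sum_weight n hn b _ _ cl, sum_weight n hn b _ _ cr] at h3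
      have hmul : ((n : ℝ) - 1) *
          ((x (Sum.inl i0) + x (Sum.inr i0)) - (x (Sum.inl b) + x (Sum.inr b))) = 0 := by
        linear_combination h3
      have := (mul_eq_zero.mp hmul).resolve_left hn1
      linarith
    · rintro ⟨cl, cr, hbal⟩
      refine ⟨?_, ?_, ?_⟩
      · intro k
        have hk := k.2
        rw [bbe_dot, sub_eq_zero]
        exact (cl ⟨k.1, by omega⟩ (ne_b _ _ (by omega))).trans
          (cl ⟨k.1 + 1, by omega⟩ (ne_b _ _ (by omega))).symm
      · intro k
        have hk := k.2
        rw [bbe_dot, sub_eq_zero]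
        exact (cr ⟨k.1, by omega⟩ (ne_b _ _ (by omega))).trans
          (cr ⟨k.1 + 1, by omega⟩ (ne_b _ _ (by omega))).symm
      · rw [hdot, sum_weight n hn b _ _ cl, sum_weight n hn b _ _ cr]
        linear_combination ((n : ℝ) - 1) * hbal
  constructor
  · rintro ⟨hpos, hne0, hor, hmin⟩
    obtain ⟨cl, cr, hbal⟩ := (orth_iff a).1 hor
    have hL0 : (0 : ℝ) ≤ a (Sum.inl i0) := hpos _
    have hp0 : (0 : ℝ) ≤ a (Sum.inl b) := hpos _
    have hR0 : (0 : ℝ) ≤ a (Sum.inr i0) := hpos _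
    have hq0 : (0 : ℝ) ≤ a (Sum.inr b) := hpos _
    have hall0 : a (Sum.inl i0) = 0 → a (Sum.inr i0) = 0 → a (Sum.inl b) = 0 →
        a (Sum.inr b) = 0 → False := by
      intro h1 h2 h3 h4
      apply hne0
      funext u
      simp only [Pi.zero_apply]
      cases u with
      | inl i =>
        by_cases hib : i = b
        · rw [hib]; exact h3
        · rw [cl i hib]; exact h1
      | inr i =>
        by_cases hib : i = b
        · rw [hib]; exact h4
        · rw [cr i hib]; exact h2
    by_cases hL : a (Sum.inl i0) = 0
    · by_cases hR : a (Sum.inr i0) = 0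
      · -- all zero, contradiction
        exfalso
        have hp : a (Sum.inl b) = 0 := by
          rw [hL, hR] at hbal; linarith
        have hq : a (Sum.inr b) = 0 := by
          rw [hL, hR] at hbal; linarith
        exact hall0 hL hR hp hq
      · -- L = 0, R > 0
        have hRpos : 0 < a (Sum.inr i0) := lt_of_le_of_ne hR0 (Ne.symm hR)
        by_cases hq : a (Sum.inr b) = 0
        · -- p = R, candidate c4
          refine ⟨a (Sum.inr i0), hRpos, Or.inr (Or.inr (Or.inr ?_))⟩
          have hp : a (Sum.inl b) = a (Sum.inr i0) := by
            rw [hL, hq] at hbal; linarith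
          funext u
          cases u with
          | inl i =>
            by_cases hib : i = b
            · simp [hib, hp]
            · simp [hib, cl i hib, hL]
          | inr i =>
            by_cases hib : i = b
            · simp [hib, hq]
            · simp [hib, cr i hib]
        · by_cases hp : a (Sum.inl b) = 0
          · -- q = R, candidate c3
            refine ⟨a (Sum.inr i0), hRpos, Or.inr (Or.inr (Or.inl ?_))⟩
            have hq' : a (Sum.inr b) = a (Sum.inr i0) := by
              rw [hL, hp] at hbal; linarith
            funext u
            cases u with
            | inl i =>
              by_cases hib : i = b
              · simp [hib, hp]
              · simp [hib, cl i hib, hL]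
            | inr i =>
              by_cases hib : i = b
              · simp [hib, hq']
              · simp [hib, cr i hib]
          · -- p > 0 and q > 0 : not minimal, c3 has smaller support
            exfalso
            apply hmin
            refine ⟨Sum.elim (fun _ : Fin n => (0 : ℝ)) (fun _ : Fin n => (1 : ℝ)),
              ?_, ?_, ?_, ?_⟩
            · refine Pi.le_def.mpr fun u => ?_
              cases u <;> simp
            · intro h0
              simpa using congrFun h0 (Sum.inr i0)
            · refine (orth_iff _).2 ⟨?_, ?_, ?_⟩
              · intro i _; simp
              · intro i _; simp
              · simp
            · rw [Set.ssubset_iff_subset_ne]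
              constructor
              · intro u hu
                rw [Function.mem_support] at hu ⊢
                cases u with
                | inl i => simp at hu
                | inr i =>
                  by_cases hib : i = b
                  · rw [hib]; exact hq
                  · rw [cr i hib]; exact hR
              · intro hcon
                have h1 : Sum.inl b ∈ Function.support a := hp
                rw [← hcon, Function.mem_support] at h1
                simp at h1
    · -- L > 0
      have hLpos : 0 < a (Sum.inl i0) := lt_of_le_of_ne hL0 (Ne.symm hL)
      by_cases hR : a (Sum.inr i0) = 0
      · -- L > 0, R = 0
        by_cases hp : a (Sum.inl b) = 0
        · -- q = L, candidate c2
          refine ⟨a (Sum.inl i0), hLpos, Or.inr (Or.inl ?_)⟩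
          have hq : a (Sum.inr b) = a (Sum.inl i0) := by
            rw [hR, hp] at hbal; linarith
          funext u
          cases u with
          | inl i =>
            by_cases hib : i = b
            · simp [hib, hp]
            · simp [hib, cl i hib]
          | inr i =>
            by_cases hib : i = b
            · simp [hib, hq]
            · simp [hib, cr i hib, hR]
        · by_cases hq : a (Sum.inr b) = 0
          · -- p = L, candidate c1
            refine ⟨a (Sum.inl i0), hLpos, Or.inl ?_⟩
            have hp' : a (Sum.inl b) = a (Sum.inl i0) := by
              rw [hR, hq] at hbal; linarith
            funext u
            cases u with
            | inl i =>
              by_cases hib : i = b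
              · simp [hib, hp']
              · simp [hib, cl i hib]
            | inr i =>
              by_cases hib : i = b
              · simp [hib, hq]
              · simp [hib, cr i hib, hR]
          · -- p > 0, q > 0 : c1 has smaller support
            exfalso
            apply hmin
            refine ⟨Sum.elim (fun _ : Fin n => (1 : ℝ)) (fun _ : Fin n => (0 : ℝ)),
              ?_, ?_, ?_, ?_⟩
            · refine Pi.le_def.mpr fun u => ?_
              cases u <;> simp
            · intro h0
              simpa using congrFun h0 (Sum.inl i0)
            · refine (orth_iff _).2 ⟨?_, ?_, ?_⟩
              · intro i _; simp
              · intro i _; simp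
              · simp
            · rw [Set.ssubset_iff_subset_ne]
              constructor
              · intro u hu
                rw [Function.mem_support] at hu ⊢
                cases u with
                | inl i =>
                  by_cases hib : i = b
                  · rw [hib]; exact hp
                  · rw [cl i hib]; exact hL
                | inr i => simp at hu
              · intro hcon
                have h1 : Sum.inr b ∈ Function.support a := hq
                rw [← hcon, Function.mem_support] at h1
                simp at h1
      · -- L > 0, R > 0 : never minimal
        have hRpos : 0 < a (Sum.inr i0) := lt_of_le_of_ne hR0 (Ne.symm hR)
        exfalso
        apply hmin
        by_cases hp : a (Sum.inl b) = 0
        · -- use c2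
          have hq : a (Sum.inr b) ≠ 0 := by
            intro h0
            rw [hp, h0] at hbal
            linarith
          refine ⟨Sum.elim (fun i : Fin n => if i = b then (0 : ℝ) else 1)
              (fun i : Fin n => if i = b then (1 : ℝ) else 0), ?_, ?_, ?_, ?_⟩
          · refine Pi.le_def.mpr fun u => ?_
            cases u <;> dsimp <;> split <;> norm_num
          · intro h0
            have := congrFun h0 (Sum.inl i0)
            simp [hi0b] at this
          · refine (orth_iff _).2 ⟨?_, ?_, ?_⟩
            · intro i hib; simp [hib, hi0b]
            · intro i hib; simp [hib, hi0b]
            · simp [hi0b]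
          · rw [Set.ssubset_iff_subset_ne]
            constructor
            · intro u hu
              rw [Function.mem_support] at hu ⊢
              cases u with
              | inl i =>
                by_cases hib : i = b
                · simp [hib] at hu
                · rw [cl i hib]; exact hL
              | inr i =>
                by_cases hib : i = b
                · rw [hib]; exact hq
                · simp [hib] at hu
            · intro hcon
              have h1 : Sum.inr i0 ∈ Function.support a := hR
              rw [← hcon, Function.mem_support] at h1
              simp [hi0b] at h1
        · -- use c1
          refine ⟨Sum.elim (fun _ : Fin n => (1 : ℝ)) (fun _ : Fin n => (0 : ℝ)),
            ?_, ?_, ?_, ?_⟩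
          · refine Pi.le_def.mpr fun u => ?_
            cases u <;> simp
          · intro h0
            simpa using congrFun h0 (Sum.inl i0)
          · refine (orth_iff _).2 ⟨?_, ?_, ?_⟩
            · intro i _; simp
            · intro i _; simp
            · simp
          · rw [Set.ssubset_iff_subset_ne]
            constructor
            · intro u hu
              rw [Function.mem_support] at hu ⊢
              cases u with
              | inl i =>
                by_cases hib : i = b
                · rw [hib]; exact hp
                · rw [cl i hib]; exact hL
              | inr i => simp at hu
            · intro hcon
              have h1 : Sum.inr i0 ∈ Function.support a := hR
              rw [← hcon, Function.mem_support] at h1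
              simp at h1
  · rintro ⟨t, ht, hc | hc | hc | hc⟩
    -- Case c1 : all of left clique
    · subst hc
      refine ⟨?_, ?_, ?_, ?_⟩
      · refine Pi.le_def.mpr fun u => ?_
        cases u <;> simp <;> positivity
      · intro h0
        have := congrFun h0 (Sum.inl i0)
        simp at this
        exact absurd this (ne_of_gt ht)
      · refine (orth_iff _).2 ⟨?_, ?_, ?_⟩
        · intro i _; simp
        · intro i _; simp
        · simp
      · rintro ⟨a', hpos', hne', hor', hss⟩
        obtain ⟨cl', cr', hbal'⟩ := (orth_iff a').1 hor'
        obtain ⟨hsub, hnsub⟩ := Set.ssubset_iff_subset_ne.1 hss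
        have hout : ∀ u, (t • Sum.elim (fun _ : Fin n => (1 : ℝ))
            (fun _ : Fin n => (0 : ℝ))) u = 0 → a' u = 0 := by
          intro u hu
          by_contra hc2
          exact hsub hc2 hu
        have hr0 : ∀ i, a' (Sum.inr i) = 0 := fun i => hout _ (by simp)
        have hpq : a' (Sum.inl i0) = a' (Sum.inl b) := by
          rw [hr0, hr0] at hbal'; linarith
        have hLne : a' (Sum.inl i0) ≠ 0 := by
          intro h0
          apply hne'
          funext u
          simp only [Pi.zero_apply]
          cases u with
          | inl i =>
            by_cases hib : i = b
            · rw [hib, ← hpq]; exact h0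
            · rw [cl' i hib]; exact h0
          | inr i => exact hr0 i
        apply hnsub
        apply Set.Subset.antisymm hsub
        intro u hu
        rw [Function.mem_support] at hu ⊢
        cases u with
        | inl i =>
          by_cases hib : i = b
          · rw [hib, ← hpq]; exact hLne
          · rw [cl' i hib]; exact hLne
        | inr i => simp at hu
    -- Case c2 : left clique minus bridge, plus right bridge
    · subst hc
      refine ⟨?_, ?_, ?_, ?_⟩
      · refine Pi.le_def.mpr fun u => ?_
        cases u <;> dsimp <;> split <;> simp <;> positivity
      · intro h0
        have := congrFun h0 (Sum.inl i0)
        simp [hi0b] at this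
        exact absurd this (ne_of_gt ht)
      · refine (orth_iff _).2 ⟨?_, ?_, ?_⟩
        · intro i hib; simp [hib, hi0b]
        · intro i hib; simp [hib, hi0b]
        · simp [hi0b]
      · rintro ⟨a', hpos', hne', hor', hss⟩
        obtain ⟨cl', cr', hbal'⟩ := (orth_iff a').1 hor'
        obtain ⟨hsub, hnsub⟩ := Set.ssubset_iff_subset_ne.1 hss
        have hout : ∀ u, (t • Sum.elim (fun i : Fin n => if i = b then (0 : ℝ) else 1)
            (fun i : Fin n => if i = b then (1 : ℝ) else 0)) u = 0 → a' u = 0 := by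
          intro u hu
          by_contra hc2
          exact hsub hc2 hu
        have hp0 : a' (Sum.inl b) = 0 := hout _ (by simp)
        have hr0 : ∀ i, i ≠ b → a' (Sum.inr i) = 0 := fun i hib => hout _ (by simp [hib])
        have hR0 : a' (Sum.inr i0) = 0 := hr0 i0 hi0b
        have hpq : a' (Sum.inl i0) = a' (Sum.inr b) := by
          rw [hp0, hR0] at hbal'; linarith
        have hLne : a' (Sum.inl i0) ≠ 0 := by
          intro h0
          apply hne'
          funext u
          simp only [Pi.zero_apply]
          cases u with
          | inl i =>
            by_cases hib : i = b
            · rw [hib]; exact hp0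
            · rw [cl' i hib]; exact h0
          | inr i =>
            by_cases hib : i = b
            · rw [hib, ← hpq]; exact h0
            · exact hr0 i hib
        apply hnsub
        apply Set.Subset.antisymm hsub
        intro u hu
        rw [Function.mem_support] at hu ⊢
        cases u with
        | inl i =>
          by_cases hib : i = b
          · simp [hib] at hu
          · rw [cl' i hib]; exact hLne
        | inr i =>
          by_cases hib : i = b
          · rw [hib, ← hpq]; exact hLne
          · simp [hib] at hu
    -- Case c3 : all of right clique
    · subst hc
      refine ⟨?_, ?_, ?_, ?_⟩
      · refine Pi.le_def.mpr fun u => ?_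
        cases u <;> simp <;> positivity
      · intro h0
        have := congrFun h0 (Sum.inr i0)
        simp at this
        exact absurd this (ne_of_gt ht)
      · refine (orth_iff _).2 ⟨?_, ?_, ?_⟩
        · intro i _; simp
        · intro i _; simp
        · simp
      · rintro ⟨a', hpos', hne', hor', hss⟩
        obtain ⟨cl', cr', hbal'⟩ := (orth_iff a').1 hor'
        obtain ⟨hsub, hnsub⟩ := Set.ssubset_iff_subset_ne.1 hss
        have hout : ∀ u, (t • Sum.elim (fun _ : Fin n => (0 : ℝ))
            (fun _ : Fin n => (1 : ℝ))) u = 0 → a' u = 0 := by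
          intro u hu
          by_contra hc2
          exact hsub hc2 hu
        have hl0 : ∀ i, a' (Sum.inl i) = 0 := fun i => hout _ (by simp)
        have hpq : a' (Sum.inr i0) = a' (Sum.inr b) := by
          rw [hl0, hl0] at hbal'; linarith
        have hRne : a' (Sum.inr i0) ≠ 0 := by
          intro h0
          apply hne'
          funext u
          simp only [Pi.zero_apply]
          cases u with
          | inl i => exact hl0 i
          | inr i =>
            by_cases hib : i = b
            · rw [hib, ← hpq]; exact h0
            · rw [cr' i hib]; exact h0
        apply hnsub
        apply Set.Subset.antisymm hsub
        intro u hu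
        rw [Function.mem_support] at hu ⊢
        cases u with
        | inl i => simp at hu
        | inr i =>
          by_cases hib : i = b
          · rw [hib, ← hpq]; exact hRne
          · rw [cr' i hib]; exact hRne
    -- Case c4 : right clique minus bridge, plus left bridge
    · subst hc
      refine ⟨?_, ?_, ?_, ?_⟩
      · refine Pi.le_def.mpr fun u => ?_
        cases u <;> dsimp <;> split <;> simp <;> positivity
      · intro h0
        have := congrFun h0 (Sum.inr i0)
        simp [hi0b] at this
        exact absurd this (ne_of_gt ht)
      · refine (orth_iff _).2 ⟨?_, ?_, ?_⟩
        · intro i hib; simp [hib, hi0b]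
        · intro i hib; simp [hib, hi0b]
        · simp [hi0b]
      · rintro ⟨a', hpos', hne', hor', hss⟩
        obtain ⟨cl', cr', hbal'⟩ := (orth_iff a').1 hor'
        obtain ⟨hsub, hnsub⟩ := Set.ssubset_iff_subset_ne.1 hss
        have hout : ∀ u, (t • Sum.elim (fun i : Fin n => if i = b then (1 : ℝ) else 0)
            (fun i : Fin n => if i = b then (0 : ℝ) else 1)) u = 0 → a' u = 0 := by
          intro u hu
          by_contra hc2
          exact hsub hc2 hu
        have hq0 : a' (Sum.inr b) = 0 := hout _ (by simp)
        have hl0 : ∀ i, i ≠ b → a' (Sum.inl i) = 0 := fun i hib => hout _ (by simp [hib])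
        have hL0 : a' (Sum.inl i0) = 0 := hl0 i0 hi0b
        have hpq : a' (Sum.inr i0) = a' (Sum.inl b) := by
          rw [hq0, hL0] at hbal'; linarith
        have hRne : a' (Sum.inr i0) ≠ 0 := by
          intro h0
          apply hne'
          funext u
          simp only [Pi.zero_apply]
          cases u with
          | inl i =>
            by_cases hib : i = b
            · rw [hib, ← hpq]; exact h0
            · exact hl0 i hib
          | inr i =>
            by_cases hib : i = b
            · rw [hib]; exact hq0
            · rw [cr' i hib]; exact h0
        apply hnsub
        apply Set.Subset.antisymm hsub
        intro u hu
        rw [Function.mem_support] at hu ⊢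
        cases u with
        | inl i =>
          by_cases hib : i = b
          · rw [hib, ← hpq]; exact hRne
          · simp [hib] at hu
        | inr i =>
          by_cases hib : i = b
          · simp [hib] at hu
          · rw [cr' i hib]; exact hRne
end
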